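/- arXiv:1903.06360 — 2 statements merged into one kernel-verified Lean document; each statement's English description precedes it below -/
import Mathlib

section
/- Let γ_n(t) be a deformation of discrete space curves. If at a time t the curve has constant speed, ε_n(t) = ε for all n, then at that time dε_n/dt = (ε/ρ)(cos(κ_{n+1} + w_{n+1}) − cos w_n) for every n; in particular, dε_n/dt = 0 if and only if cos(κ_{n+1} + w_{n+1}) = cos w_n, so the deformation is isoperimetric exactly when for each n either w_{n+1} = −w_n − κ_{n+1} or w_{n+1} = w_n − κ_{n+1} (modulo 2π). -/
open Matrix Real

/-- Rotation by `θ` about the first coordinate axis. -/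
noncomputable def R1 (θ : ℝ) : Matrix (Fin 3) (Fin 3) ℝ :=
  !![1, 0, 0; 0, Real.cos θ, -Real.sin θ; 0, Real.sin θ, Real.cos θ]

/-- Rotation by `θ` about the third coordinate axis. -/
noncomputable def R3 (θ : ℝ) : Matrix (Fin 3) (Fin 3) ℝ :=
  !![Real.cos θ, -Real.sin θ, 0; Real.sin θ, Real.cos θ, 0; 0, 0, 1]

/-- Euclidean norm on `Fin 3 → ℝ`. -/
noncomputable def norm3 (v : Fin 3 → ℝ) : ℝ := Real.sqrt (v ⬝ᵥ v)

/-- Cross product on `Fin 3 → ℝ`. -/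
def cross3 (u v : Fin 3 → ℝ) : Fin 3 → ℝ :=
  ![u 1 * v 2 - u 2 * v 1, u 2 * v 0 - u 0 * v 2, u 0 * v 1 - u 1 * v 0]

/-- If at time `t` the curve has constant speed `ε₀`, then
`dε_n/dt = (ε₀/ρ)(cos(κ_{n+1} + w_{n+1}) - cos w_n)`; in particular `dε_n/dt = 0` iff
`cos(κ_{n+1} + w_{n+1}) = cos w_n`, so the deformation is isoperimetric at `t` exactly when
for each `n` either `w_{n+1} = -w_n - κ_{n+1}` or `w_{n+1} = w_n - κ_{n+1}` modulo `2π`. -/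
theorem deformation_isoperimetric_condition
    (γ : ℤ → ℝ → Fin 3 → ℝ) (Φ : ℤ → ℝ → Matrix (Fin 3) (Fin 3) ℝ)
    (κ ν w ε : ℤ → ℝ → ℝ) (ρ εs νs : ℝ)
    (hρ : 0 < ρ)
    -- discrete space curves
    (hne : ∀ (n : ℤ) (t : ℝ), γ (n + 1) t ≠ γ n t)
    -- segment lengths
    (hε : ∀ (n : ℤ) (t : ℝ), ε n t = norm3 (γ (n + 1) t - γ n t))
    -- the frame takes values in SO(3)
    (hSO : ∀ (n : ℤ) (t : ℝ),
      Φ n t ∈ Matrix.orthogonalGroup (Fin 3) ℝ ∧ (Φ n t).det = 1)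
    -- the first column of the frame is the tangent vector
    (hT : ∀ (n : ℤ) (t : ℝ) (i : Fin 3),
      Φ n t i 0 = (γ (n + 1) t i - γ n t i) / ε n t)
    -- the frame transition relation
    (hframe : ∀ (n : ℤ) (t : ℝ),
      Φ (n + 1) t = Φ n t * R1 (-(ν (n + 1) t)) * R3 (κ (n + 1) t))
    -- smoothness in t of the curve, frame and angles
    (hγsmooth : ∀ (n : ℤ) (i : Fin 3), ContDiff ℝ (⊤ : ℕ∞) (fun t => γ n t i))
    (hΦsmooth : ∀ (n : ℤ) (i j : Fin 3), ContDiff ℝ (⊤ : ℕ∞) (fun t => Φ n t i j))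
    (hκsmooth : ∀ n : ℤ, ContDiff ℝ (⊤ : ℕ∞) (κ n))
    (hνsmooth : ∀ n : ℤ, ContDiff ℝ (⊤ : ℕ∞) (ν n))
    (hwsmooth : ∀ n : ℤ, ContDiff ℝ (⊤ : ℕ∞) (w n))
    -- the evolution equation of the curve
    (hevol : ∀ (n : ℤ) (t : ℝ) (i : Fin 3), HasDerivAt (fun s => γ n s i)
      (ε n t / ρ * (Real.cos (w n t) * Φ n t i 0 + Real.sin (w n t) * Φ n t i 1)) t)
    (t : ℝ) (ε₀ : ℝ)
    -- at time t the curve has constant speed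
    (hconst : ∀ n : ℤ, ε n t = ε₀) :
    (∀ n : ℤ, HasDerivAt (fun s => ε n s)
      (ε₀ / ρ * (Real.cos (κ (n + 1) t + w (n + 1) t) - Real.cos (w n t))) t)
    ∧ (∀ n : ℤ, HasDerivAt (fun s => ε n s) 0 t ↔
        Real.cos (κ (n + 1) t + w (n + 1) t) = Real.cos (w n t))
    ∧ ((∀ n : ℤ, HasDerivAt (fun s => ε n s) 0 t) ↔
        (∀ n : ℤ, (∃ k : ℤ, w (n + 1) t = -(w n t) - κ (n + 1) t + 2 * Real.pi * k)
          ∨ (∃ k : ℤ, w (n + 1) t = w n t - κ (n + 1) t + 2 * Real.pi * k))) := by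
  -- positivity of segment lengths
  have hεpos : ∀ n : ℤ, 0 < ε n t := by
    intro n
    rw [hε]
    unfold norm3
    apply Real.sqrt_pos.mpr
    have hv : γ (n + 1) t - γ n t ≠ 0 := sub_ne_zero.mpr (hne n t)
    have h0 : (γ (n + 1) t - γ n t) ⬝ᵥ (γ (n + 1) t - γ n t) ≠ 0 :=
      fun h => hv (dotProduct_self_eq_zero.mp h)
    have hnn : 0 ≤ (γ (n + 1) t - γ n t) ⬝ᵥ (γ (n + 1) t - γ n t) := by
      simp only [dotProduct, Fin.sum_univ_three]
      exact add_nonneg (add_nonneg (mul_self_nonneg _) (mul_self_nonneg _)) (mul_self_nonneg _)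
    exact lt_of_le_of_ne hnn (Ne.symm h0)
  have hε₀pos : 0 < ε₀ := hconst 0 ▸ hεpos 0
  have key : ∀ n : ℤ, HasDerivAt (fun s => ε n s)
      (ε₀ / ρ * (Real.cos (κ (n + 1) t + w (n + 1) t) - Real.cos (w n t))) t := by
    intro n
    -- orthonormality of the columns of Φ n t
    have hO : ∀ j k : Fin 3, Φ n t 0 j * Φ n t 0 k + Φ n t 1 j * Φ n t 1 k
        + Φ n t 2 j * Φ n t 2 k = if j = k then 1 else 0 := by
      have hA := (hSO n t).1
      rw [Matrix.mem_orthogonalGroup_iff'] at hA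
      intro j k
      have h := congrFun (congrFun hA j) k
      simpa [Matrix.mul_apply, Fin.sum_univ_three, Matrix.one_apply, mul_comm] using h
    have hS00 := hO 0 0; rw [if_pos rfl] at hS00
    have hS01 := hO 0 1; rw [if_neg (by decide)] at hS01
    have hS02 := hO 0 2; rw [if_neg (by decide)] at hS02
    -- column entries of Φ (n+1) t in terms of Φ n t
    have hB0 : ∀ i : Fin 3, Φ (n + 1) t i 0 =
        Φ n t i 0 * Real.cos (κ (n + 1) t)
        + Φ n t i 1 * (Real.cos (ν (n + 1) t) * Real.sin (κ (n + 1) t))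
        - Φ n t i 2 * (Real.sin (ν (n + 1) t) * Real.sin (κ (n + 1) t)) := by
      intro i
      rw [hframe]
      simp [R1, R3, Matrix.mul_apply, Fin.sum_univ_three]
      ring
    have hB1 : ∀ i : Fin 3, Φ (n + 1) t i 1 =
        -(Φ n t i 0 * Real.sin (κ (n + 1) t))
        + Φ n t i 1 * (Real.cos (ν (n + 1) t) * Real.cos (κ (n + 1) t))
        - Φ n t i 2 * (Real.sin (ν (n + 1) t) * Real.cos (κ (n + 1) t)) := by
      intro i
      rw [hframe]
      simp [R1, R3, Matrix.mul_apply, Fin.sum_univ_three]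
      ring
    -- the difference vector in terms of the tangent
    have hdval : ∀ i : Fin 3, γ (n + 1) t i - γ n t i = ε₀ * Φ n t i 0 := by
      intro i
      rw [hT n t i, hconst n]
      field_simp
    -- derivative of the squared length
    have hd0 := (hevol (n + 1) t 0).sub (hevol n t 0)
    have hd1 := (hevol (n + 1) t 1).sub (hevol n t 1)
    have hd2 := (hevol (n + 1) t 2).sub (hevol n t 2)
    have hg := ((hd0.mul hd0).add (hd1.mul hd1)).add (hd2.mul hd2)
    have hgteq : (γ (n + 1) t 0 - γ n t 0) * (γ (n + 1) t 0 - γ n t 0)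
        + (γ (n + 1) t 1 - γ n t 1) * (γ (n + 1) t 1 - γ n t 1)
        + (γ (n + 1) t 2 - γ n t 2) * (γ (n + 1) t 2 - γ n t 2) = ε₀ ^ 2 := by
      rw [hdval 0, hdval 1, hdval 2]
      linear_combination (ε₀ ^ 2) * hS00
    have hne0 : (γ (n + 1) t 0 - γ n t 0) * (γ (n + 1) t 0 - γ n t 0)
        + (γ (n + 1) t 1 - γ n t 1) * (γ (n + 1) t 1 - γ n t 1)
        + (γ (n + 1) t 2 - γ n t 2) * (γ (n + 1) t 2 - γ n t 2) ≠ 0 := by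
      rw [hgteq]; positivity
    have hsq := hg.sqrt hne0
    simp only [Pi.add_apply, Pi.mul_apply, Pi.sub_apply, hgteq] at hsq
    rw [Real.sqrt_sq hε₀pos.le] at hsq
    simp only [hconst, hdval, hB0, hB1] at hsq
    have hεform : ∀ s : ℝ, ε n s = Real.sqrt
        ((γ (n + 1) s 0 - γ n s 0) * (γ (n + 1) s 0 - γ n s 0)
        + (γ (n + 1) s 1 - γ n s 1) * (γ (n + 1) s 1 - γ n s 1)
        + (γ (n + 1) s 2 - γ n s 2) * (γ (n + 1) s 2 - γ n s 2)) := by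
      intro s
      rw [hε]
      simp [norm3, dotProduct, Fin.sum_univ_three]
    have hfinal := hsq.congr_of_eventuallyEq (Filter.Eventually.of_forall hεform)
    convert hfinal using 1
    case e'_4 => exact rfl
    case e'_5 => exact rfl
    rw [Real.cos_add, eq_div_iff (by positivity : (2 : ℝ) * ε₀ ≠ 0)]
    linear_combination
      (-(2 * ε₀ ^ 2 / ρ) * (Real.cos (w (n + 1) t) * Real.cos (κ (n + 1) t)
        - Real.sin (w (n + 1) t) * Real.sin (κ (n + 1) t) - Real.cos (w n t))) * hS00
      + (-(2 * ε₀ ^ 2 / ρ) * (Real.cos (w (n + 1) t) * Real.cos (ν (n + 1) t) * Real.sin (κ (n + 1) t)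
        + Real.sin (w (n + 1) t) * Real.cos (ν (n + 1) t) * Real.cos (κ (n + 1) t)
        - Real.sin (w n t))) * hS01
      + ((2 * ε₀ ^ 2 / ρ) * (Real.cos (w (n + 1) t) * Real.sin (ν (n + 1) t) * Real.sin (κ (n + 1) t)
        + Real.sin (w (n + 1) t) * Real.sin (ν (n + 1) t) * Real.cos (κ (n + 1) t))) * hS02
  have part2 : ∀ n : ℤ, HasDerivAt (fun s => ε n s) 0 t ↔
      Real.cos (κ (n + 1) t + w (n + 1) t) = Real.cos (w n t) := by
    intro n
    constructor
    · intro h0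
      have hu := (key n).unique h0
      have hne' : ε₀ / ρ ≠ 0 := by positivity
      have := (mul_eq_zero.mp hu).resolve_left hne'
      linarith
    · intro hc
      have hk := key n
      rw [hc, sub_self, mul_zero] at hk
      exact hk
  refine ⟨key, part2, ?_, ?_⟩
  · intro h n
    have hc := (part2 n).mp (h n)
    rw [Real.cos_eq_cos_iff] at hc
    obtain ⟨k, hk | hk⟩ := hc
    · right
      refine ⟨-k, ?_⟩
      push_cast
      linear_combination (-1 : ℝ) * hk
    · left
      exact ⟨k, by linear_combination hk⟩
  · intro h n
    apply (part2 n).mpr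
    rw [Real.cos_eq_cos_iff]
    rcases h n with ⟨k, hk⟩ | ⟨k, hk⟩
    · exact ⟨k, Or.inr (by linear_combination hk)⟩
    · refine ⟨-k, Or.inl ?_⟩
      push_cast
      linear_combination (-1 : ℝ) * hk
end

section
/- Let N be an odd positive integer, c ∈ ℝ, and let b : ℤ → ℝ³ be a sequence of unit vectors such that b_{n+N} = −b_n for all n, ⟨b_n, b_{n+1}⟩ = c for all n, and Σ_{n=0}^{N−1} b_{n+1} × b_n = 0. Then the mirrored sequence b′_n := (−1)^n b_n consists of unit vectors and satisfies b′_{n+N} = b′_n for all n, ⟨b′_n, b′_{n+1}⟩ = −c for all n, and Σ_{n=0}^{N−1} b′_{n+1} × b′_n = 0. In other words, the mirror involution b_n ↦ (−1)^n b_n turns an anti-oriented N-Kaleidocycle with cos ν = c into an oriented N-Kaleidocycle with cos ν = −c when N is odd. -/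
/-!
The mirror sign `(-1)^n` squares to `1`, so unit length is preserved, while consecutive signs
differ, so every product of `b'_n` with `b'_{n+1}`, dot or cross, is the negative of the
corresponding product of `b_n` and `b_{n+1}`. Since `(-1)^N = -1` for odd `N`, the mirror sign
absorbs the anti-periodicity `b_{n+N} = -b_n`, making `b'` periodic.
-/

open Matrix

theorem cross3_eq_crossProduct (u v : Fin 3 → ℝ) : cross3 u v = u ⨯₃ v := rfl

theorem neg_one_zpow_mul_self (n : ℤ) : (-1 : ℝ) ^ n * (-1) ^ n = 1 := by
  rw [← mul_zpow, neg_one_mul, neg_neg, _root_.one_zpow]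

theorem neg_one_zpow_mul_succ (n : ℤ) : (-1 : ℝ) ^ n * (-1) ^ (n + 1) = -1 := by
  rw [zpow_add_one₀ (neg_ne_zero.2 one_ne_zero), ← mul_assoc, neg_one_zpow_mul_self, mul_neg_one]

noncomputable def mirror {M : Type*} [AddCommGroup M] [Module ℝ M] (b : ℤ → M) (n : ℤ) : M :=
  (-1 : ℝ) ^ n • b n

section Mirror

variable {M : Type*} [AddCommGroup M] [Module ℝ M] (b : ℤ → M)

theorem mirror_add_of_odd {N : ℤ} (hN : Odd N) (hanti : ∀ n, b (n + N) = -b n) (n : ℤ) :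
    mirror b (n + N) = mirror b n := by
  rw [mirror, mirror, hanti, zpow_add₀ (neg_ne_zero.2 one_ne_zero), hN.neg_one_zpow, mul_neg_one,
    neg_smul, smul_neg, neg_neg]

theorem apply_mirror_mirror_succ {P : Type*} [AddCommGroup P] [Module ℝ P]
    (f : M →ₗ[ℝ] M →ₗ[ℝ] P) (n : ℤ) :
    f (mirror b n) (mirror b (n + 1)) = -f (b n) (b (n + 1)) := by
  rw [mirror, mirror, LinearMap.map_smul₂, map_smul, smul_smul, neg_one_zpow_mul_succ, neg_one_smul]

end Mirror

section Vectors

variable {ι : Type*} [Fintype ι] (b : ℤ → ι → ℝ)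

theorem mirror_dotProduct_mirror (n : ℤ) : mirror b n ⬝ᵥ mirror b n = b n ⬝ᵥ b n := by
  rw [mirror, smul_dotProduct, dotProduct_smul, smul_smul, neg_one_zpow_mul_self, one_smul]

theorem mirror_dotProduct_mirror_succ (n : ℤ) :
    mirror b n ⬝ᵥ mirror b (n + 1) = -(b n ⬝ᵥ b (n + 1)) :=
  apply_mirror_mirror_succ b (dotProductBilin ℝ ℝ) n

end Vectors

theorem cross3_mirror_succ_mirror (b : ℤ → Fin 3 → ℝ) (n : ℤ) :
    cross3 (mirror b (n + 1)) (mirror b n) = -cross3 (b (n + 1)) (b n) := by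
  simpa only [cross3_eq_crossProduct, LinearMap.flip_apply] using
    apply_mirror_mirror_succ b crossProduct.flip n

theorem mirror_antioriented_to_oriented_general
    (N : ℕ) (hodd : Odd N) (c : ℝ) (b : ℤ → Fin 3 → ℝ)
    (hunit : ∀ n : ℤ, b n ⬝ᵥ b n = 1)
    (hanti : ∀ n : ℤ, b (n + N) = -b n)
    (hc : ∀ n : ℤ, b n ⬝ᵥ b (n + 1) = c)
    (hclose : ∑ n ∈ Finset.range N, cross3 (b ((n : ℤ) + 1)) (b (n : ℤ)) = 0)
    (b' : ℤ → Fin 3 → ℝ) (hb' : ∀ n : ℤ, b' n = ((-1 : ℝ) ^ n) • b n) :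
    (∀ n : ℤ, b' n ⬝ᵥ b' n = 1)
    ∧ (∀ n : ℤ, b' (n + N) = b' n)
    ∧ (∀ n : ℤ, b' n ⬝ᵥ b' (n + 1) = -c)
    ∧ ∑ n ∈ Finset.range N, cross3 (b' ((n : ℤ) + 1)) (b' (n : ℤ)) = 0 := by
  obtain rfl : b' = mirror b := funext hb'
  refine ⟨fun n => ?_, mirror_add_of_odd b hodd.natCast hanti, fun n => ?_, ?_⟩
  · rw [mirror_dotProduct_mirror, hunit]
  · rw [mirror_dotProduct_mirror_succ, hc]
  · simp only [cross3_mirror_succ_mirror, Finset.sum_neg_distrib, hclose, neg_zero]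

/-- For odd `N`, the mirror involution `b_n ↦ (-1)^n b_n` turns an anti-oriented
`N`-Kaleidocycle with `cos ν = c` into an oriented `N`-Kaleidocycle with `cos ν = -c`. -/
theorem mirror_antioriented_to_oriented
    (N : ℕ) (hN : 0 < N) (hodd : Odd N) (c : ℝ) (b : ℤ → Fin 3 → ℝ)
    (hunit : ∀ n : ℤ, b n ⬝ᵥ b n = 1)
    (hanti : ∀ n : ℤ, b (n + N) = -b n)
    (hc : ∀ n : ℤ, b n ⬝ᵥ b (n + 1) = c)
    (hclose : ∑ n ∈ Finset.range N, cross3 (b ((n : ℤ) + 1)) (b (n : ℤ)) = 0)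
    (b' : ℤ → Fin 3 → ℝ) (hb' : ∀ n : ℤ, b' n = ((-1 : ℝ) ^ n) • b n) :
    (∀ n : ℤ, b' n ⬝ᵥ b' n = 1)
    ∧ (∀ n : ℤ, b' (n + N) = b' n)
    ∧ (∀ n : ℤ, b' n ⬝ᵥ b' (n + 1) = -c)
    ∧ ∑ n ∈ Finset.range N, cross3 (b' ((n : ℤ) + 1)) (b' (n : ℤ)) = 0 :=
  mirror_antioriented_to_oriented_general N hodd c b hunit hanti hc hclose b' hb'
end
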